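/- arXiv:1602.03679 — 3 statements merged into one kernel-verified Lean document; each statement's English description precedes it below -/
import Mathlib

section
/- Let H be a symmetric bilinear form on a finite-dimensional real vector space V and W ⊆ V a subspace with V = W + W⊥, where W⊥ is the H-orthogonal complement of W and W ∩ W⊥ is contained in the radical of H restricted to W. If ind(H|_W) = 0 and the radical of H|_W is trivial, then ind(H) + nul(H) = ind(H|_{W⊥}) + nul(H|_{W⊥}). -/
open Module

/-- Negative inertia index of a bilinear form: maximal dimension of a subspace
on which the form is negative definite. -/
noncomputable def negIdx {V : Type*} [AddCommGroup V] [Module ℝ V]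
    (H : LinearMap.BilinForm ℝ V) : ℕ :=
  sSup {n : ℕ | ∃ U : Submodule ℝ V, (∀ x ∈ U, x ≠ 0 → H x x < 0) ∧ finrank ℝ U = n}

/-- Nullity of a bilinear form: the dimension of its radical. -/
noncomputable def nulIdx {V : Type*} [AddCommGroup V] [Module ℝ V]
    (H : LinearMap.BilinForm ℝ V) : ℕ :=
  finrank ℝ (LinearMap.ker H)

lemma negIdx_bdd {V : Type*} [AddCommGroup V] [Module ℝ V] [FiniteDimensional ℝ V]
    (H : LinearMap.BilinForm ℝ V) :
    BddAbove {n : ℕ | ∃ U : Submodule ℝ V, (∀ x ∈ U, x ≠ 0 → H x x < 0) ∧ finrank ℝ U = n} :=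
  ⟨finrank ℝ V, fun n ⟨U, _, hU⟩ => hU ▸ Submodule.finrank_le U⟩

theorem stmt1 {V : Type*} [AddCommGroup V] [Module ℝ V] [FiniteDimensional ℝ V]
    (H : LinearMap.BilinForm ℝ V) (hsymm : ∀ x y : V, H x y = H y x)
    (W : Submodule ℝ V)
    (hspan : W ⊔ H.orthogonal W = ⊤)
    (hrad : ∀ x ∈ W ⊓ H.orthogonal W, ∀ y ∈ W, H x y = 0)
    (hindW : negIdx (H.restrict W) = 0)
    (hradW : LinearMap.ker (H.restrict W) = ⊥) :
    negIdx H + nulIdx H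
      = negIdx (H.restrict (H.orthogonal W)) + nulIdx (H.restrict (H.orthogonal W)) := by
  set Wp := H.orthogonal W with hWp
  -- cross terms vanish
  have hcross : ∀ w ∈ W, ∀ z ∈ Wp, H w z = 0 := fun w hw z hz => hz w hw
  have hcross' : ∀ w ∈ W, ∀ z ∈ Wp, H z w = 0 := fun w hw z hz => (hsymm z w).trans (hz w hw)
  -- membership in ker of restrict W
  have hkerW : ∀ x : W, (∀ y ∈ W, H x y = 0) → x = 0 := by
    intro x hx
    have : x ∈ LinearMap.ker (H.restrict W) := by
      rw [LinearMap.mem_ker]; ext y; exact hx y y.2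
    rwa [hradW, Submodule.mem_bot] at this
  -- W ⊓ Wp = ⊥
  have hcap : W ⊓ Wp = ⊥ := by
    rw [Submodule.eq_bot_iff]
    intro x hx
    have := hkerW ⟨x, hx.1⟩ (hrad x hx)
    exact congrArg Subtype.val this
  have hcompl : IsCompl W Wp := ⟨disjoint_iff.mpr hcap, codisjoint_iff.mpr hspan⟩
  -- H is positive semidefinite on W
  have hPSD : ∀ x ∈ W, 0 ≤ H x x := by
    intro x hxW
    by_contra hneg
    push_neg at hneg
    have hx0 : x ≠ 0 := by rintro rfl; simp at hneg
    have hx0' : (⟨x, hxW⟩ : W) ≠ 0 := fun h => hx0 (congrArg Subtype.val h)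
    have hmem : (1 : ℕ) ∈ {n : ℕ | ∃ U : Submodule ℝ W,
        (∀ y ∈ U, y ≠ 0 → (H.restrict W) y y < 0) ∧ finrank ℝ U = n} := by
      refine ⟨Submodule.span ℝ {(⟨x, hxW⟩ : W)}, ?_, finrank_span_singleton hx0'⟩
      intro y hy hy0
      rw [Submodule.mem_span_singleton] at hy
      obtain ⟨c, rfl⟩ := hy
      have hc : c ≠ 0 := by rintro rfl; simp at hy0
      have heq : (H.restrict W) (c • ⟨x, hxW⟩) (c • ⟨x, hxW⟩) = c * c * H x x := by
        simp [LinearMap.BilinForm.restrict_apply]; ring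
      rw [heq]
      exact mul_neg_of_pos_of_neg (mul_self_pos.mpr hc) hneg
    have := le_csSup (negIdx_bdd (H.restrict W)) hmem
    rw [← negIdx, hindW] at this
    omega
  -- H is positive definite on W (Cauchy–Schwarz)
  have hPD : ∀ x ∈ W, x ≠ 0 → 0 < H x x := by
    intro x hxW hx0
    rcases lt_or_eq_of_le (hPSD x hxW) with h | h
    · exact h
    exfalso
    apply hx0
    have hx' : ∀ y ∈ W, H x y = 0 := by
      intro y hyW
      have key : ∀ t : ℝ, 0 ≤ 2 * t * H x y + t ^ 2 * H y y := by
        intro t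
        have h1 : (0:ℝ) ≤ H (x + t • y) (x + t • y) :=
          hPSD _ (W.add_mem hxW (W.smul_mem t hyW))
        have h2 : H (x + t • y) (x + t • y)
            = H x x + 2 * t * H x y + t ^ 2 * H y y := by
          simp only [map_add, map_smul, LinearMap.add_apply, LinearMap.smul_apply,
            smul_eq_mul]
          rw [hsymm y x]; ring
        rw [h2, ← h] at h1; linarith
      have hb : 0 ≤ H y y := hPSD y hyW
      set a := H x y
      set b := H y y
      by_contra ha
      have h2 : (0:ℝ) < a * a := mul_self_pos.mpr ha
      by_cases hb2 : b = 0
      · have := key (-a); nlinarith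
      · have hb' : 0 < b := lt_of_le_of_ne hb (Ne.symm hb2)
        have h6 := key (-a / b)
        have h8 : 2 * (-a / b) * a + (-a / b) ^ 2 * b = -(a ^ 2 / b) := by
          field_simp; ring
        rw [h8] at h6
        have h9 : 0 < a ^ 2 / b := div_pos (by positivity) hb'
        linarith
    exact congrArg Subtype.val (hkerW ⟨x, hxW⟩ hx')
  -- decomposition machinery
  set πW := W.linearProjOfIsCompl Wp hcompl with hπW
  set π := Wp.linearProjOfIsCompl W hcompl.symm with hπ
  have hdecomp : ∀ u : V, (πW u : V) + (π u : V) = u := fun u =>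
    Submodule.projection_add_projection_eq_self hcompl u
  have hsplit : ∀ u : V, H u u = H (πW u) (πW u) + H (π u) (π u) := by
    intro u
    conv_lhs => rw [← hdecomp u]
    simp only [map_add, LinearMap.add_apply]
    rw [hcross (πW u) (πW u).2 (π u) (π u).2, hcross' (πW u) (πW u).2 (π u) (π u).2]
    ring
  -- negIdx equality: the defining sets coincide
  have hsets : {n : ℕ | ∃ U : Submodule ℝ V, (∀ x ∈ U, x ≠ 0 → H x x < 0) ∧ finrank ℝ U = n}
      = {n : ℕ | ∃ U : Submodule ℝ Wp,
          (∀ x ∈ U, x ≠ 0 → (H.restrict Wp) x x < 0) ∧ finrank ℝ U = n} := by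
    ext n
    constructor
    · rintro ⟨U, hUneg, rfl⟩
      refine ⟨U.map π, ?_, ?_⟩
      · rintro x hx hx0
        obtain ⟨u, hu, rfl⟩ := hx
        have hu0 : u ≠ 0 := by rintro rfl; simp at hx0
        have h1 : H u u < 0 := hUneg u hu hu0
        have h2 : 0 ≤ H (πW u) (πW u) := hPSD _ (πW u).2
        have h3 := hsplit u
        have : (H.restrict Wp) (π u) (π u) = H (π u : V) (π u : V) := rfl
        rw [this]; linarith
      · have hinj : Function.Injective (π.domRestrict U) := by
          rw [← LinearMap.ker_eq_bot, Submodule.eq_bot_iff]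
          intro u hu
          rw [LinearMap.mem_ker, LinearMap.domRestrict_apply] at hu
          by_contra hu0
          have huW : (u : V) ∈ W := by
            rw [← Submodule.linearProjOfIsCompl_apply_eq_zero_iff hcompl.symm]
            exact hu
          have h1 : H u u < 0 := hUneg u u.2 (fun h => hu0 (Subtype.ext h))
          exact absurd (hPSD _ huW) (not_le.mpr h1)
        have := LinearMap.finrank_range_of_inj hinj
        rwa [LinearMap.range_domRestrict] at this
    · rintro ⟨U, hUneg, rfl⟩
      refine ⟨U.map Wp.subtype, ?_, (Wp.equivSubtypeMap U).finrank_eq.symm⟩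
      rintro x hx hx0
      obtain ⟨u, hu, rfl⟩ := hx
      have hu0 : u ≠ 0 := by rintro rfl; simp at hx0
      exact hUneg u hu hu0
  -- nulIdx equality
  have hker : LinearMap.ker H = (LinearMap.ker (H.restrict Wp)).map Wp.subtype := by
    ext x
    constructor
    · intro hx
      replace hx : H x = 0 := hx
      have hx' : ∀ y : V, H x y = 0 := fun y => by rw [hx]; rfl
      have hxWp : x ∈ Wp := by
        have hw0 : (πW x : V) = 0 := by
          have : ∀ y ∈ W, H (πW x : V) y = 0 := by
            intro y hy
            have := hx' y
            conv_lhs at this => rw [← hdecomp x]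
            rw [map_add, LinearMap.add_apply, hcross' y hy (π x) (π x).2] at this
            linarith
          have := hkerW ⟨(πW x : V), (πW x).2⟩ this
          exact congrArg Subtype.val this
        have := hdecomp x
        rw [hw0, zero_add] at this
        rw [← this]; exact (π x).2
      exact ⟨⟨x, hxWp⟩, LinearMap.mem_ker.mpr (by ext y; exact hx' y), rfl⟩
    · rintro ⟨u, hu, rfl⟩
      replace hu : H.restrict Wp u = 0 := hu
      refine LinearMap.mem_ker.mpr ?_
      ext y
      have hu' : ∀ z ∈ Wp, H (u : V) z = 0 := by
        intro z hz
        have := LinearMap.congr_fun hu ⟨z, hz⟩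
        simpa using this
      show H (u : V) y = 0
      conv_lhs => rw [← hdecomp y]
      rw [map_add, hcross' (πW y) (πW y).2 u u.2, hu' (π y) (π y).2]
      simp
  have hnul : nulIdx H = nulIdx (H.restrict Wp) := by
    rw [nulIdx, nulIdx, hker]
    exact ((Wp.equivSubtypeMap _).finrank_eq).symm
  rw [negIdx, negIdx, hsets, hnul]
end

section
/- Let A : V → V be a linear automorphism of a finite-dimensional real vector space. Define, for m ≥ 1, n_m = dim ker(A^m − Id). Then there exists a finite partition ℕ_{≥1} = N_1 ∪ … ∪ N_k such that for each i, every element of N_i is a multiple of m_i := min N_i, and n_m = n_{m_i} for all m ∈ N_i. -/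
open Module

section Aux
variable {V : Type*} [AddCommGroup V] [Module ℝ V]

lemma myAux_toLM_pow (A : V ≃ₗ[ℝ] V) (m : ℕ) :
    A.toLinearMap ^ m = ((A ^ m : V ≃ₗ[ℝ] V) : V →ₗ[ℝ] V) :=
  (map_pow (LinearEquiv.automorphismGroup.toLinearMapMonoidHom (R := ℝ) (M := V)) A m).symm

lemma myAux_mem_fker (A : V ≃ₗ[ℝ] V) (m : ℕ) (v : V) :
    v ∈ LinearMap.ker ((A.toLinearMap ^ m) - LinearMap.id (R := ℝ) (M := V)) ↔ (A ^ m) v = v := by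
  rw [LinearMap.mem_ker, LinearMap.sub_apply, LinearMap.id_apply, sub_eq_zero, myAux_toLM_pow]
  rfl

lemma myAux_fix_zpow (B : V ≃ₗ[ℝ] V) (v : V) (h : B v = v) (z : ℤ) : (B ^ z) v = v := by
  have hn : ∀ k : ℕ, (B ^ k) v = v := by
    intro k
    induction k with
    | zero => rfl
    | succ j ih =>
      rw [pow_succ]
      show (B ^ j) (B v) = v
      rw [h, ih]
  rcases z with k | k
  · rw [show (Int.ofNat k) = (k : ℤ) from rfl, zpow_natCast]; exact hn k
  · rw [zpow_negSucc]
    have h2 : (B ^ (k + 1)) ((B ^ (k + 1))⁻¹ v) = (B ^ (k + 1)) v := by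
      show (B ^ (k + 1)) ((B ^ (k + 1)).symm v) = _
      rw [LinearEquiv.apply_symm_apply, hn]
    exact (B ^ (k + 1)).injective h2

-- if A^a v = v and A^b v = v then A^(gcd a b) v = v
lemma myAux_fix_gcd (A : V ≃ₗ[ℝ] V) (v : V) (a b : ℕ)
    (ha : (A ^ a) v = v) (hb : (A ^ b) v = v) : (A ^ Nat.gcd a b) v = v := by
  have hza : (A ^ (a : ℤ)) v = v := by rw [zpow_natCast]; exact ha
  have hzb : (A ^ (b : ℤ)) v = v := by rw [zpow_natCast]; exact hb
  have key : (A ^ ((Nat.gcd a b : ℕ) : ℤ)) v = v := by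
    rw [Nat.gcd_eq_gcd_ab, zpow_add, zpow_mul, zpow_mul]
    show ((A ^ (a:ℤ)) ^ Nat.gcdA a b) (((A ^ (b:ℤ)) ^ Nat.gcdB a b) v) = v
    rw [myAux_fix_zpow _ v hzb, myAux_fix_zpow _ v hza]
  rw [← zpow_natCast]
  exact key

lemma myAux_fix_dvd (A : V ≃ₗ[ℝ] V) (v : V) (a b : ℕ) (hab : a ∣ b)
    (ha : (A ^ a) v = v) : (A ^ b) v = v := by
  obtain ⟨c, rfl⟩ := hab
  rw [pow_mul]
  induction c with
  | zero => rfl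
  | succ j ih =>
    rw [pow_succ]
    show ((A ^ a) ^ j) ((A ^ a) v) = v
    rw [ha, ih]

end Aux

theorem stmt4 {V : Type*} [AddCommGroup V] [Module ℝ V] [FiniteDimensional ℝ V]
    (A : V ≃ₗ[ℝ] V)
    (n : ℕ → ℕ)
    (hn : ∀ m : ℕ, n m = finrank ℝ
      (LinearMap.ker ((A.toLinearMap ^ m) - LinearMap.id (R := ℝ) (M := V)))) :
    ∃ (k : ℕ) (N : Fin k → Set ℕ),
      (∀ i, (N i).Nonempty) ∧
      (⋃ i, N i) = {m : ℕ | 1 ≤ m} ∧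
      Pairwise (Function.onFun Disjoint N) ∧
      ∀ i : Fin k, ∀ m ∈ N i, (sInf (N i)) ∣ m ∧ n m = n (sInf (N i)) := by
  classical
  set f : ℕ → Submodule ℝ V :=
    fun m => LinearMap.ker ((A.toLinearMap ^ m) - LinearMap.id (R := ℝ) (M := V)) with hf
  have memf : ∀ m v, v ∈ f m ↔ (A ^ m) v = v := fun m v => myAux_mem_fker A m v
  have fmono : ∀ a b : ℕ, a ∣ b → f a ≤ f b := by
    intro a b hab v hv
    rw [memf] at *
    exact myAux_fix_dvd A v a b hab hv
  have fgcd : ∀ a b : ℕ, f a ⊓ f b ≤ f (Nat.gcd a b) := by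
    intro a b v hv
    rw [Submodule.mem_inf, memf, memf] at hv
    rw [memf]
    exact myAux_fix_gcd A v a b hv.1 hv.2
  -- choose M ≥ 1 with maximal finrank (f M)
  have hbdd : BddAbove {d : ℕ | ∃ m : ℕ, 1 ≤ m ∧ finrank ℝ (f m) = d} := by
    refine ⟨finrank ℝ V, ?_⟩
    rintro d ⟨m, _, rfl⟩
    exact Submodule.finrank_le _
  have hne : {d : ℕ | ∃ m : ℕ, 1 ≤ m ∧ finrank ℝ (f m) = d}.Nonempty :=
    ⟨finrank ℝ (f 1), 1, le_refl 1, rfl⟩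
  obtain ⟨M, hM1, hMmax⟩ : ∃ M : ℕ, 1 ≤ M ∧
      finrank ℝ (f M) = sSup {d : ℕ | ∃ m : ℕ, 1 ≤ m ∧ finrank ℝ (f m) = d} :=
    Nat.sSup_mem hne hbdd
  have hle : ∀ m : ℕ, 1 ≤ m → f m ≤ f M := by
    intro m hm
    have h1 : f m ≤ f (Nat.lcm m M) := fmono _ _ (Nat.dvd_lcm_left m M)
    have h2 : f M ≤ f (Nat.lcm m M) := fmono _ _ (Nat.dvd_lcm_right m M)
    have hlcm1 : 1 ≤ Nat.lcm m M := Nat.one_le_iff_ne_zero.2 (Nat.lcm_ne_zero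
      (Nat.one_le_iff_ne_zero.1 hm) (Nat.one_le_iff_ne_zero.1 hM1))
    have hdim : finrank ℝ (f (Nat.lcm m M)) ≤ finrank ℝ (f M) := by
      rw [hMmax]
      exact le_csSup hbdd ⟨Nat.lcm m M, hlcm1, rfl⟩
    have heq : f M = f (Nat.lcm m M) := Submodule.eq_of_le_of_finrank_le h2 hdim
    exact heq ▸ h1
  have fgcdM : ∀ m : ℕ, 1 ≤ m → f m = f (Nat.gcd m M) := by
    intro m hm
    refine le_antisymm ?_ (fmono _ _ (Nat.gcd_dvd_left m M))
    exact fun v hv => fgcd m M (Submodule.mem_inf.2 ⟨hv, hle m hm hv⟩)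
  -- the finite set of possible kernels
  set T : Finset (Submodule ℝ V) := (Nat.divisors M).image f with hT
  refine ⟨T.card, fun i => {m : ℕ | 1 ≤ m ∧ f m = (T.equivFin.symm i : Submodule ℝ V)}, ?_, ?_, ?_, ?_⟩
  · -- nonempty
    intro i
    obtain ⟨d, hd, hdW⟩ := Finset.mem_image.1 (T.equivFin.symm i).2
    exact ⟨d, Nat.one_le_iff_ne_zero.2 (Nat.pos_of_mem_divisors hd).ne', hdW⟩
  · -- union
    ext m
    simp only [Set.mem_iUnion, Set.mem_setOf_eq]
    constructor
    · rintro ⟨i, hm, _⟩; exact hm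
    · intro hm
      have hgcd : Nat.gcd m M ∈ Nat.divisors M :=
        Nat.mem_divisors.2 ⟨Nat.gcd_dvd_right m M, Nat.one_le_iff_ne_zero.1 hM1⟩
      have hmem : f m ∈ T := by
        rw [fgcdM m hm]
        exact Finset.mem_image.2 ⟨Nat.gcd m M, hgcd, rfl⟩
      refine ⟨T.equivFin ⟨f m, hmem⟩, hm, ?_⟩
      rw [Equiv.symm_apply_apply]
  · -- pairwise disjoint
    intro i j hij
    rw [Function.onFun, Set.disjoint_left]
    rintro m ⟨_, hmi⟩ ⟨_, hmj⟩
    exact hij (T.equivFin.symm.injective (Subtype.ext (hmi ▸ hmj ▸ rfl)))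
  · -- divisibility and equal n
    intro i m hm
    set Ni : Set ℕ := {m : ℕ | 1 ≤ m ∧ f m = (T.equivFin.symm i : Submodule ℝ V)} with hNi
    have hNine : Ni.Nonempty := ⟨m, hm⟩
    have h0 : sInf Ni ∈ Ni := Nat.sInf_mem hNine
    set m0 := sInf Ni with hm0
    have hgcdmem : Nat.gcd m0 m ∈ Ni := by
      constructor
      · exact Nat.one_le_iff_ne_zero.2 (Nat.pos_of_ne_zero fun h =>
          (Nat.one_le_iff_ne_zero.1 h0.1) (Nat.eq_zero_of_gcd_eq_zero_left h) ).ne'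
      · refine le_antisymm ?_ ?_
        · intro v hv
          rw [← h0.2]
          exact fmono _ _ (Nat.gcd_dvd_left m0 m) hv
        · intro v hv
          refine fgcd m0 m (Submodule.mem_inf.2 ⟨?_, ?_⟩)
          · rw [h0.2]; exact hv
          · rw [hm.2]; exact hv
    have hge : m0 ≤ Nat.gcd m0 m := Nat.sInf_le hgcdmem
    have hle2 : Nat.gcd m0 m ≤ m0 :=
      Nat.le_of_dvd (Nat.lt_of_lt_of_le Nat.zero_lt_one h0.1) (Nat.gcd_dvd_left m0 m)
    have heq : Nat.gcd m0 m = m0 := le_antisymm hle2 hge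
    constructor
    · rw [← heq]; exact Nat.gcd_dvd_right m0 m
    · rw [hn, hn]
      show finrank ℝ (f m) = finrank ℝ (f m0)
      rw [hm.2, h0.2]
end

section
/- Suppose there are r sequences of closed intervals I_{i,m} = [a_{i,m}, b_{i,m}] ⊆ ℝ (i = 1,…,r, m ≥ 1) such that for each i either (a) b_{i,m} ≤ D for all m, or (b) there is ā_i ≥ a > 0 with m·ā_i − D ≤ a_{i,m} and b_{i,m} ≤ m·ā_i + D for all m. Then for every real d > D, the total number of pairs (i,m) with d ∈ I_{i,m} is at most r·⌊1 + 2D/a⌋. -/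
/-!
In case (a) no interval `I_{i,m}` reaches `d > D`. In case (b), `d ∈ I_{i,m}` forces
`|m ā_i - d| ≤ D`, so `m` is a natural number in an interval of length `2D/ā_i ≤ 2D/a`, of which
there are at most `⌊1 + 2D/a⌋`. Summing over the `r` indices `i` gives the bound.
-/

open Set

theorem natCast_preimage_Icc_subset_Ico (x y : ℝ) :
    (Nat.cast ⁻¹' Icc x y : Set ℕ) ⊆ Ico ⌈x⌉₊ (⌈x⌉₊ + ⌊1 + (y - x)⌋₊) := by
  rintro m ⟨hxm, hmy⟩
  have hceil : ⌈x⌉₊ ≤ m := Nat.ceil_le.2 hxm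
  have hgap : m - ⌈x⌉₊ + 1 ≤ ⌊1 + (y - x)⌋₊ := by
    apply Nat.le_floor
    push_cast [hceil]
    linarith [Nat.le_ceil x]
  exact ⟨hceil, by omega⟩

theorem finite_natCast_preimage_Icc (x y : ℝ) : (Nat.cast ⁻¹' Icc x y : Set ℕ).Finite :=
  (finite_Ico _ _).subset (natCast_preimage_Icc_subset_Ico x y)

theorem ncard_natCast_preimage_Icc_le (x y : ℝ) :
    (Nat.cast ⁻¹' Icc x y : Set ℕ).ncard ≤ ⌊1 + (y - x)⌋₊ := by
  simpa using ncard_le_ncard (natCast_preimage_Icc_subset_Ico x y) (finite_Ico _ _)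

section NearMultiples

variable {c D d : ℝ}

theorem setOf_near_multiple_subset (hc : 0 < c) :
    {m : ℕ | (m : ℝ) * c - D ≤ d ∧ d ≤ m * c + D} ⊆
      Nat.cast ⁻¹' Icc ((d - D) / c) ((d + D) / c) := by
  rintro m ⟨hlo, hhi⟩
  constructor
  · rw [div_le_iff₀ hc]; linarith
  · rw [le_div_iff₀ hc]; linarith

theorem finite_setOf_near_multiple (hc : 0 < c) :
    {m : ℕ | (m : ℝ) * c - D ≤ d ∧ d ≤ m * c + D}.Finite :=
  (finite_natCast_preimage_Icc _ _).subset (setOf_near_multiple_subset hc)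

theorem ncard_setOf_near_multiple_le (hc : 0 < c) :
    {m : ℕ | (m : ℝ) * c - D ≤ d ∧ d ≤ m * c + D}.ncard ≤ ⌊1 + 2 * D / c⌋₊ := by
  have hlen : (d + D) / c - (d - D) / c = 2 * D / c := by ring
  calc _ ≤ (Nat.cast ⁻¹' Icc ((d - D) / c) ((d + D) / c) : Set ℕ).ncard :=
        ncard_le_ncard (setOf_near_multiple_subset hc) (finite_natCast_preimage_Icc _ _)
    _ ≤ ⌊1 + 2 * D / c⌋₊ := hlen ▸ ncard_natCast_preimage_Icc_le _ _

end NearMultiples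

theorem finite_and_ncard_le_of_fibers {ι α : Type*} [Fintype ι] (s : Set (ι × α)) (K : ℕ)
    (hs : ∀ i, {x | (i, x) ∈ s}.Finite ∧ {x | (i, x) ∈ s}.ncard ≤ K) :
    s.Finite ∧ s.ncard ≤ Fintype.card ι * K := by
  have hunion : s = ⋃ i, Prod.mk i '' {x | (i, x) ∈ s} := by
    ext ⟨i, x⟩
    simp
  rw [hunion]
  refine ⟨finite_iUnion fun i ↦ (hs i).1.image _, ?_⟩
  calc _ ≤ ∑ i, (Prod.mk i '' {x | (i, x) ∈ s}).ncard := ncard_iUnion_le_of_fintype _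
    _ ≤ ∑ _i : ι, K := Finset.sum_le_sum fun i _ ↦ by
        rw [ncard_image_of_injective _ (Prod.mk_right_injective i)]
        exact (hs i).2
    _ = Fintype.card ι * K := by simp

theorem finite_and_ncard_setOf_mem_Icc_le {a D d abar : ℝ} (ha : 0 < a) (hD : 0 ≤ D)
    (habar : a ≤ abar) {A B : ℕ → ℝ}
    (hAB : ∀ m : ℕ, 1 ≤ m → (m : ℝ) * abar - D ≤ A m ∧ B m ≤ (m : ℝ) * abar + D) :
    {m | 1 ≤ m ∧ A m ≤ d ∧ d ≤ B m}.Finite ∧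
      {m | 1 ≤ m ∧ A m ≤ d ∧ d ≤ B m}.ncard ≤ ⌊1 + 2 * D / a⌋₊ := by
  have habar0 : 0 < abar := ha.trans_le habar
  have hsub : {m | 1 ≤ m ∧ A m ≤ d ∧ d ≤ B m} ⊆
      {m : ℕ | (m : ℝ) * abar - D ≤ d ∧ d ≤ m * abar + D} := by
    rintro m ⟨hm, hA, hB⟩
    exact ⟨(hAB m hm).1.trans hA, hB.trans (hAB m hm).2⟩
  refine ⟨(finite_setOf_near_multiple habar0).subset hsub, ?_⟩
  calc _ ≤ _ := ncard_le_ncard hsub (finite_setOf_near_multiple habar0)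
    _ ≤ ⌊1 + 2 * D / abar⌋₊ := ncard_setOf_near_multiple_le habar0
    _ ≤ ⌊1 + 2 * D / a⌋₊ := by gcongr

theorem stmt11 (r : ℕ) (a D : ℝ) (ha : 0 < a) (hD : 0 ≤ D)
    (A B : Fin r → ℕ → ℝ)
    (hAB : ∀ i : Fin r,
      (∀ m : ℕ, 1 ≤ m → B i m ≤ D) ∨
      (∃ abar : ℝ, a ≤ abar ∧ ∀ m : ℕ, 1 ≤ m →
        (m : ℝ) * abar - D ≤ A i m ∧ B i m ≤ (m : ℝ) * abar + D)) :
    ∀ d : ℝ, D < d →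
      {p : Fin r × ℕ | 1 ≤ p.2 ∧ A p.1 p.2 ≤ d ∧ d ≤ B p.1 p.2}.Finite ∧
      {p : Fin r × ℕ | 1 ≤ p.2 ∧ A p.1 p.2 ≤ d ∧ d ≤ B p.1 p.2}.ncard
        ≤ r * ⌊1 + 2 * D / a⌋₊ := by
  intro d hd
  have hfiber : ∀ i, {m | 1 ≤ m ∧ A i m ≤ d ∧ d ≤ B i m}.Finite ∧
      {m | 1 ≤ m ∧ A i m ≤ d ∧ d ≤ B i m}.ncard ≤ ⌊1 + 2 * D / a⌋₊ := by
    intro i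
    rcases hAB i with hlow | ⟨abar, habar, hnear⟩
    · have hempty : {m | 1 ≤ m ∧ A i m ≤ d ∧ d ≤ B i m} = ∅ :=
        eq_empty_of_forall_notMem fun m ⟨hm, _, hB⟩ ↦ (hB.trans (hlow m hm)).not_gt hd
      exact ⟨hempty ▸ finite_empty, by simp [hempty]⟩
    · exact finite_and_ncard_setOf_mem_Icc_le ha hD habar hnear
  simpa only [Fintype.card_fin] using finite_and_ncard_le_of_fibers
    {p : Fin r × ℕ | 1 ≤ p.2 ∧ A p.1 p.2 ≤ d ∧ d ≤ B p.1 p.2} _ hfiber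
end
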